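/- Let R be a commutative ring, let m ≥ 0 and n ≥ 1 be integers, and let α be an m×m matrix over R. Let V_n(α) be the (nm)×(nm) matrix, written as an n×n array of m×m blocks, whose (i+1, i)-blocks are the identity matrix I_m for 1 ≤ i ≤ n−1, whose (1, n)-block is (−1)^{n+1}·α, and whose remaining blocks are zero. Then in the polynomial ring R[x] one has the identity of determinants det(I_{nm} + x·V_n(α)) = det(I_m + xⁿ·α), where the matrices are regarded as matrices over R[x]. -/

import Mathlib

/-!
Let `T` be the matrix with blocks `c • 1` on the block subdiagonal, `β` in the top right
corner and zeros elsewhere. In the block decomposition that splits off the first block row and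
column, `1 + T` has top left block `1`, and its Schur complement is again of the form `1 + T'`,
with one block fewer and corner `-c • β`. By induction `det (1 + T) = det (1 + (-c) ^ (n - 1) • β)`,
and `X • V` is `T` for `c = X`, `β = ((-1) ^ (n + 1) * X) • α`, where `(-X) ^ (n - 1)` cancels
the sign.
-/

open Polynomial Matrix

def finSuccProdEquiv (k m : ℕ) : Fin m ⊕ Fin k × Fin m ≃ Fin (k + 1) × Fin m :=
  (((finSuccEquiv k).prodCongr (Equiv.refl (Fin m))).trans optionProdEquiv).symm

namespace Matrix

variable {S : Type*} [CommRing S] {m : ℕ}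

def cyclicBlockShift (n : ℕ) (c : S) (β : Matrix (Fin m) (Fin m) S) :
    Matrix (Fin n × Fin m) (Fin n × Fin m) S :=
  of fun p q =>
    (if (p.1 : ℕ) = q.1 + 1 ∧ p.2 = q.2 then c else 0) +
      if (p.1 : ℕ) = 0 ∧ (q.1 : ℕ) = n - 1 then β p.2 q.2 else 0

theorem det_one_add_cyclicBlockShift_one (c : S) (β : Matrix (Fin m) (Fin m) S) :
    (1 + cyclicBlockShift 1 c β).det = (1 + β).det := by
  rw [← det_submatrix_equiv_self (Equiv.uniqueProd (Fin m) (Fin 1)).symm]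
  congr 1
  ext a b
  simp [cyclicBlockShift, one_apply]

theorem det_one_add_cyclicBlockShift_succ_succ (k : ℕ) (c : S)
    (β : Matrix (Fin m) (Fin m) S) :
    (1 + cyclicBlockShift (k + 2) c β).det =
      (1 + cyclicBlockShift (k + 1) c (-c • β)).det := by
  let B : Matrix (Fin m) (Fin (k + 1) × Fin m) S :=
    of fun a q => if (q.1 : ℕ) = k then β a q.2 else 0
  let C : Matrix (Fin (k + 1) × Fin m) (Fin m) S :=
    of fun p b => if (p.1 : ℕ) = 0 ∧ p.2 = b then c else 0
  have hblocks : (1 + cyclicBlockShift (k + 2) c β).submatrix (finSuccProdEquiv (k + 1) m)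
      (finSuccProdEquiv (k + 1) m) = fromBlocks 1 B C (1 + cyclicBlockShift (k + 1) c 0) := by
    ext (a | ⟨i, a⟩) (b | ⟨j, b⟩) <;>
      simp [B, C, finSuccProdEquiv, cyclicBlockShift, one_apply, eq_comm (a := (0 : Fin (k + 2)))]
  rw [← det_submatrix_equiv_self (finSuccProdEquiv (k + 1) m), hblocks, det_fromBlocks_one₁₁]
  congr 1
  ext ⟨i, a⟩ ⟨j, b⟩
  by_cases hi : i = 0 <;> by_cases hj : (j : ℕ) = k <;>
    simp [B, C, cyclicBlockShift, mul_apply, hi, hj, sub_eq_add_neg]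

theorem det_one_add_cyclicBlockShift (n : ℕ) (c : S) (β : Matrix (Fin m) (Fin m) S) :
    (1 + cyclicBlockShift (n + 1) c β).det = (1 + (-c) ^ n • β).det := by
  induction n generalizing β with
  | zero => simpa using det_one_add_cyclicBlockShift_one c β
  | succ k ih => rw [det_one_add_cyclicBlockShift_succ_succ, ih, smul_smul, pow_succ]

end Matrix

/-- For an `m × m` matrix `α` over a commutative ring `R` and `n ≥ 1`,
the `(nm) × (nm)` block companion-type matrix `V` with identity `m × m` blocks in the
positions `(i+1, i)` for `1 ≤ i ≤ n-1`, the block `(-1)^(n+1) • α` in position `(1, n)`,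
and zero blocks elsewhere (here blocks are indexed by `Fin n`, zero-based), satisfies
`det (1 + x • V) = det (1 + xⁿ • α)` over the polynomial ring `R[x]`. -/
theorem det_one_add_X_smul_verschiebung {R : Type*} [CommRing R]
    (m n : ℕ) (hn : 1 ≤ n)
    (α : Matrix (Fin m) (Fin m) R)
    (V : Matrix (Fin n × Fin m) (Fin n × Fin m) R)
    (hV : ∀ p q : Fin n × Fin m,
      V p q =
        if (p.1 : ℕ) = (q.1 : ℕ) + 1 then (if p.2 = q.2 then 1 else 0)
        else if (p.1 : ℕ) = 0 ∧ (q.1 : ℕ) = n - 1 then (-1) ^ (n + 1) * α p.2 q.2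
        else 0) :
    ((1 : Matrix (Fin n × Fin m) (Fin n × Fin m) R[X]) + (X : R[X]) • V.map C).det
      = ((1 : Matrix (Fin m) (Fin m) R[X]) + (X ^ n : R[X]) • α.map C).det := by
  obtain ⟨k, rfl⟩ : ∃ k, n = k + 1 := ⟨n - 1, by omega⟩
  have hXV : (X : R[X]) • V.map C =
      cyclicBlockShift (k + 1) X (((-1) ^ (k + 2) * X : R[X]) • α.map C) := by
    ext p q : 1
    rw [Matrix.smul_apply, map_apply, hV]
    by_cases hpq : (p.1 : ℕ) = q.1 + 1
    · have hp : p.1 ≠ 0 := fun h => by simp [h] at hpq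
      by_cases h2 : p.2 = q.2 <;> simp [cyclicBlockShift, hpq, hp, h2]
    · by_cases hcorner : p.1 = 0 ∧ (q.1 : ℕ) = k
      · simp [cyclicBlockShift, hcorner]
        ring
      · simp [cyclicBlockShift, hpq, hcorner]
  have hsign : (-X : R[X]) ^ k * ((-1) ^ (k + 2) * X) = X ^ (k + 1) := by
    rw [pow_add, neg_one_sq, mul_one, ← mul_assoc, ← mul_pow, neg_mul_neg, mul_one, pow_succ]
  rw [hXV, det_one_add_cyclicBlockShift, smul_smul, hsign]
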